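/- arXiv:2408.03201 — 6 statements merged into one kernel-verified Lean document; each statement's English description precedes it below -/
import Mathlib

section
/- Suppose λ and κ are infinite cardinals with λ < κ. If Fr_λ(κ, ℵ₀) holds (every algebra of cardinality κ with at most λ operations has a countably infinite free subset), then there is no Artinian algebra of cardinality ≥ κ with signature of size at most λ. -/
universe u

structure Alg (ι : Type u) (M : Type u) where
  arity : ι → ℕ
  op : (i : ι) → (Fin (arity i) → M) → M

namespace Alg

variable {ι M : Type u}

/-- A set is closed under all operations of the algebra. -/
def Closed (A : Alg ι M) (S : Set M) : Prop :=
  ∀ (i : ι) (x : Fin (A.arity i) → M), (∀ k, x k ∈ S) → A.op i x ∈ S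

/-- Membership in the subalgebra generated by `X`. -/
inductive cl (A : Alg ι M) (X : Set M) : M → Prop
  | base {m : M} (h : m ∈ X) : cl A X m
  | op (i : ι) (x : Fin (A.arity i) → M) (h : ∀ k, cl A X (x k)) : cl A X (A.op i x)

/-- A subset is free if no element lies in the subalgebra generated by the others. -/
def Free (A : Alg ι M) (X : Set M) : Prop :=
  ∀ x ∈ X, ¬ A.cl (X \ {x}) x

/-- An algebra is Artinian if there is no infinite strictly descending chain of
(nonempty closed) subalgebras. -/
def Artinian (A : Alg ι M) : Prop :=
  ¬ ∃ S : ℕ → Set M, (∀ n, (S n).Nonempty ∧ A.Closed (S n)) ∧ ∀ n, S (n + 1) ⊂ S n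

end Alg

open Cardinal

/-!
Inside an algebra of cardinality at least `κ`, a set of `κ` generators generates a subalgebra of
cardinality exactly `κ`, since there are fewer than `κ` operations. By `Fr_λ(κ, ℵ₀)` that subalgebra
has an infinite free subset, which stays free in the whole algebra. If `x₀, x₁, …` are distinct
elements of a free set `X`, the subalgebras generated by `X \ {x₀, …, xₙ₋₁}` form a strictly
descending chain: `xₙ` lies in the `n`-th one but, by freeness, not in the next.
-/

open FirstOrder Language

namespace Alg

variable {ι M : Type u}

theorem cl_mono {A : Alg ι M} {X Y : Set M} (hXY : X ⊆ Y) {m : M} (h : A.cl X m) : A.cl Y m := by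
  induction h with
  | base hm => exact .base (hXY hm)
  | op i x _ ih => exact .op i x ih

theorem closed_setOf_cl (A : Alg ι M) (X : Set M) : A.Closed {m | A.cl X m} :=
  fun i x hx => .op i x hx

theorem Free.not_artinian {A : Alg ι M} {X : Set M} (hfree : A.Free X) (hX : X.Infinite) :
    ¬ A.Artinian := by
  let g : ℕ → M := fun n => hX.natEmbedding X n
  have hgX : ∀ n, g n ∈ X := fun n => (hX.natEmbedding X n).2
  have hg : Function.Injective g := Subtype.val_injective.comp (hX.natEmbedding X).injective
  let S : ℕ → Set M := fun n => {m | A.cl (X \ g '' Set.Iio n) m}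
  have hS : Antitone S := fun _ _ hab _ =>
    cl_mono (Set.sdiff_subset_sdiff_right (Set.image_mono (Set.Iio_subset_Iio hab)))
  have hmem : ∀ n, g n ∈ S n := fun n =>
    .base ⟨hgX n, fun ⟨k, hk, hgk⟩ => (hg hgk).not_lt hk⟩
  have hnotmem : ∀ n, g n ∉ S (n + 1) := by
    refine fun n h => hfree (g n) (hgX n) (cl_mono ?_ h)
    rintro y ⟨hyX, hy⟩
    exact ⟨hyX, fun hyn => hy ⟨n, n.lt_succ_self, Eq.symm hyn⟩⟩
  exact fun hart => hart ⟨S, fun n => ⟨⟨g n, hmem n⟩, A.closed_setOf_cl _⟩,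
    fun n => ⟨hS n.le_succ, fun h => hnotmem n (h (hmem n))⟩⟩

def language (A : Alg ι M) : FirstOrder.Language.{u, u} where
  Functions n := {i : ι // A.arity i = n}
  Relations _ := PEmpty

abbrev toStructure (A : Alg ι M) : A.language.Structure M where
  funMap f x := A.op f.1 (fun k => x (Fin.cast f.2 k))
  RelMap r := r.elim

theorem coe_closure_eq_setOf_cl (A : Alg ι M) (X : Set M) :
    let := A.toStructure
    (Substructure.closure A.language X : Set M) = {m | A.cl X m} := by
  let := A.toStructure
  refine Set.Subset.antisymm (Substructure.closure_le (S := ⟨{m | A.cl X m}, ?_⟩) |>.2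
    fun _ => .base) fun m h => ?_
  · exact fun f x hx => .op f.1 (fun k => x (Fin.cast f.2 k)) fun k => hx _
  · induction h with
    | base hm => exact Substructure.subset_closure hm
    | op i x _ ih => exact (Substructure.closure A.language X).fun_mem ⟨i, rfl⟩ x ih

theorem mk_setOf_cl_le (A : Alg ι M) (X : Set M) : #{m | A.cl X m} ≤ max ℵ₀ (#X + #ι) := by
  let := A.toStructure
  have hsig : #(Σ n, A.language.Functions n) = #ι := mk_congr (Equiv.sigmaFiberEquiv A.arity)
  have h := Substructure.lift_card_closure_le (L := A.language) (s := X)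
  rw [lift_id, lift_id, lift_id, hsig] at h
  rwa [← coe_closure_eq_setOf_cl]

theorem mk_setOf_cl_eq (A : Alg ι M) {X : Set M} (hX : ℵ₀ ≤ #X) (hι : #ι ≤ #X) :
    #{m | A.cl X m} = #X := by
  refine le_antisymm ?_ (mk_le_mk_of_subset fun _ => .base)
  calc #{m | A.cl X m} ≤ max ℵ₀ (#X + #ι) := A.mk_setOf_cl_le X
    _ = #X := by rw [add_eq_left hX hι, max_eq_right hX]

def restrict (A : Alg ι M) (P : Set M) (hP : A.Closed P) : Alg ι P where
  arity := A.arity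
  op i x := ⟨A.op i (fun k => x k), hP i _ fun k => (x k).2⟩

theorem cl_restrict_of_cl_image_val {A : Alg ι M} {P : Set M} (hP : A.Closed P) {Z : Set P}
    {m : M} (h : A.cl (Subtype.val '' Z) m) : ∃ hm : m ∈ P, (A.restrict P hP).cl Z ⟨m, hm⟩ := by
  induction h with
  | base hm =>
    obtain ⟨z, hz, rfl⟩ := hm
    exact ⟨z.2, .base hz⟩
  | op i x _ ih =>
    choose hm hcl using ih
    exact ⟨hP i x hm, .op (A := A.restrict P hP) i (fun k => ⟨x k, hm k⟩) hcl⟩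

theorem Free.image_val {A : Alg ι M} {P : Set M} (hP : A.Closed P) {Y : Set P}
    (hY : (A.restrict P hP).Free Y) : A.Free (Subtype.val '' Y) := by
  rintro _ ⟨y, hy, rfl⟩ hcl
  rw [← Set.image_singleton, ← Set.image_sdiff Subtype.val_injective] at hcl
  exact hY y hy (cl_restrict_of_cl_image_val hP hcl).2

end Alg

/-- If λ < κ are infinite cardinals and Fr_λ(κ, ℵ₀) holds (every algebra
of cardinality κ with at most λ operations has an infinite free subset), then there is
no Artinian algebra of cardinality ≥ κ with signature of size at most λ. -/
theorem stmt7 (lam κ : Cardinal.{u}) (hlam : ℵ₀ ≤ lam) (hlt : lam < κ)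
    (hFr : ∀ (ι M : Type u) (A : Alg ι M), #ι ≤ lam → #M = κ →
      ∃ X : Set M, X.Infinite ∧ A.Free X) :
    ∀ (ι M : Type u) (A : Alg ι M), #ι ≤ lam → κ ≤ #M → ¬ A.Artinian := by
  intro ι M A hι hκM
  obtain ⟨X, hXκ⟩ := le_mk_iff_exists_set.1 hκM
  let P := {m | A.cl X m}
  have hP : #P = κ := by
    subst hXκ
    exact A.mk_setOf_cl_eq (hlam.trans hlt.le) (hι.trans hlt.le)
  obtain ⟨Y, hYinf, hYfree⟩ := hFr ι P (A.restrict P (A.closed_setOf_cl X)) hι hP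
  exact (hYfree.image_val _).not_artinian (hYinf.image Subtype.val_injective.injOn)
end

section
/- (Whaley's successor lemma) Let λ, κ be infinite cardinals. If there exists an Artinian algebra of cardinality κ with signature of size at most λ, then there exists an Artinian algebra of cardinality κ⁺ with signature of size at most λ. -/
universe u

/-!
Realise κ⁺ as the well-order `W = (succ κ).ord.ToType` and pick `x₀ : W` with `Iio x₀` of
size κ; every `Iio δ` with `x₀ ≤ δ` then has size κ too, so there are bijections
`φ δ : Iio δ ≃ Iio x₀`. Copy the Artinian algebra onto `Iio x₀` and add the binary operations
`encode δ α = φ δ α` and its inverse `decode`. In a strictly descending chain `S n` of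
subalgebras the traces `S n ∩ Iio x₀` are subalgebras of the original algebra, so they
stabilise. From then on a witness `γ n ∈ S n \ S (n + 1)` lies above every element `δ` of
`S (n + 1)`: otherwise `γ n` would be recovered in `S (n + 1)` from its code `φ δ (γ n)`,
which lies in the stable trace. So the witnesses decrease strictly, which is impossible in a
well-order.
-/

open Cardinal Set

namespace Alg

variable {ι M : Type u}

inductive SuccSig (ι : Type u) : Type u
  | base (i : ι)
  | encode
  | decode

def SuccSig.equivOption : SuccSig ι ≃ Option (Option ι) where
  toFun
    | .base i => some (some i)
    | .encode => some none
    | .decode => none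
  invFun
    | some (some i) => .base i
    | some none => .encode
    | none => .decode
  left_inv := by rintro (_ | _ | _) <;> rfl
  right_inv := by rintro (_ | _ | _) <;> rfl

theorem SuccSig.mk_le {lam : Cardinal.{u}} (hlam : ℵ₀ ≤ lam) (hι : #ι ≤ lam) :
    #(SuccSig ι) ≤ lam := by
  have hone : (1 : Cardinal) ≤ lam := one_le_aleph0.trans hlam
  rw [mk_congr SuccSig.equivOption, mk_option, mk_option]
  exact add_le_of_le hlam (add_le_of_le hlam hι hone) hone

theorem Artinian.exists_forall_ge_eq {A : Alg ι M} (hA : A.Artinian) {T : ℕ → Set M}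
    (hT : Antitone T) (hTc : ∀ n, A.Closed (T n)) : ∃ N, ∀ n ≥ N, T n = T N := by
  by_contra! hne
  choose next hnext_ge hnext_ne using hne
  have hssub : ∀ k, T (next^[k + 1] 0) ⊂ T (next^[k] 0) := fun k => by
    rw [Function.iterate_succ_apply']
    exact (hT (hnext_ge _)).ssubset_of_ne (hnext_ne _)
  exact hA ⟨fun k => T (next^[k] 0),
    fun k => ⟨nonempty_of_ssubset' (hssub k), hTc _⟩, hssub⟩

section SuccAlg

variable {W : Type u} [LinearOrder W] {x₀ : W}

section Coding

variable (φ : ∀ δ, x₀ ≤ δ → Iio δ ≃ Iio x₀)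

def encode (δ α : W) : W :=
  if h : x₀ ≤ δ ∧ α < δ then φ δ h.1 ⟨α, h.2⟩ else α

def decode (δ ξ : W) : W :=
  if h : x₀ ≤ δ ∧ ξ < x₀ then (φ δ h.1).symm ⟨ξ, h.2⟩ else ξ

variable {φ} {δ α : W}

theorem encode_lt (hδ : x₀ ≤ δ) (hα : α < δ) : encode φ δ α < x₀ := by
  rw [encode, dif_pos ⟨hδ, hα⟩]
  exact (φ δ hδ ⟨α, hα⟩).2

theorem decode_encode (hδ : x₀ ≤ δ) (hα : α < δ) : decode φ δ (encode φ δ α) = α := by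
  rw [decode, dif_pos ⟨hδ, encode_lt hδ hα⟩]
  simp [encode, dif_pos (And.intro hδ hα)]

end Coding

variable (A : Alg ι M) (e : M ≃ Iio x₀) (φ : ∀ δ, x₀ ≤ δ → Iio δ ≃ Iio x₀)

def succAlg : Alg (SuccSig ι) W where
  arity
    | .base i => A.arity i
    | .encode | .decode => 2
  op
    | .base i, x => if h : ∀ k, x k < x₀ then e (A.op i fun k => e.symm ⟨x k, h k⟩) else x₀
    | .encode, x => encode φ (x 0) (x 1)
    | .decode, x => decode φ (x 0) (x 1)

variable {A e φ}

theorem succAlg_op_base (i : ι) (x : Fin (A.arity i) → M) :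
    (succAlg A e φ).op (.base i) (fun k => e (x k)) = e (A.op i x) := by
  have hx : ∀ k, (e (x k) : W) < x₀ := fun k => (e (x k)).2
  simp only [succAlg, hx, implies_true, dite_true]
  exact congrArg (fun m => (e m : W))
    (congrArg (A.op i) (funext fun k => e.symm_apply_apply (x k)))

variable {K : Set W} {δ α : W}

theorem Closed.encode_mem (hK : (succAlg A e φ).Closed K) (hδ : δ ∈ K) (hα : α ∈ K) :
    encode φ δ α ∈ K :=
  hK .encode ![δ, α] (Fin.forall_fin_two.2 ⟨hδ, hα⟩)

theorem Closed.decode_mem (hK : (succAlg A e φ).Closed K) (hδ : δ ∈ K) (hα : α ∈ K) :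
    decode φ δ α ∈ K :=
  hK .decode ![δ, α] (Fin.forall_fin_two.2 ⟨hδ, hα⟩)

theorem Closed.preimage (hK : (succAlg A e φ).Closed K) : A.Closed {m | (e m : W) ∈ K} :=
  fun i x hx => by
    simpa only [succAlg_op_base, mem_ofPred_eq] using hK (.base i) (fun k => e (x k)) hx

theorem Closed.lt_of_mem_diff {K' : Set W} (hK : (succAlg A e φ).Closed K) (hKK' : K ⊆ K')
    (hK' : (succAlg A e φ).Closed K') (hlow : K' ∩ Iio x₀ ⊆ K) {γ : W} (hγ : γ ∈ K' \ K)
    (hδ : δ ∈ K) : δ < γ := by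
  have hγx₀ : x₀ ≤ γ := not_lt.1 fun h => hγ.2 (hlow ⟨hγ.1, h⟩)
  rcases lt_or_ge δ x₀ with hδx₀ | hx₀δ
  · exact hδx₀.trans_le hγx₀
  -- if `γ < δ`, then `γ` is decoded inside `K` from its code, which lies below `x₀`
  refine lt_of_le_of_ne (not_lt.1 fun hγδ => hγ.2 ?_) (ne_of_mem_of_not_mem hδ hγ.2)
  have hcode : encode φ δ γ ∈ K := hlow ⟨hK'.encode_mem (hKK' hδ) hγ.1, encode_lt hx₀δ hγδ⟩
  simpa only [decode_encode hx₀δ hγδ] using hK.decode_mem hδ hcode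

theorem Artinian.succAlg [WellFoundedLT W] (hA : A.Artinian) : (succAlg A e φ).Artinian := by
  rintro ⟨S, hS, hSsucc⟩
  have hSanti : Antitone S := antitone_nat_of_succ_le fun n => (hSsucc n).subset
  obtain ⟨N, hN⟩ := hA.exists_forall_ge_eq (T := fun n => {m | (e m : W) ∈ S n})
    (fun m n hmn _ hx => hSanti hmn hx) fun n => (hS n).2.preimage
  have hlow : ∀ n ≥ N, S n ∩ Iio x₀ ⊆ S (n + 1) := by
    rintro n hn ξ ⟨hξ, hξx₀⟩
    have hmem : e.symm ⟨ξ, hξx₀⟩ ∈ {m | (e m : W) ∈ S n} := by simpa using hξ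
    rw [hN n hn, ← hN (n + 1) (by omega)] at hmem
    simpa using hmem
  choose γ hγ using fun n => nonempty_of_ssubset (hSsucc n)
  have hγ_anti : StrictAnti fun k => γ (N + k) := strictAnti_nat_of_succ_lt fun k =>
    (hS _).2.lt_of_mem_diff (hSsucc _).subset (hS _).2 (hlow _ (by omega)) (hγ _) (hγ _).1
  exact not_strictAnti_of_wellFoundedLT _ hγ_anti

end SuccAlg

end Alg

theorem Cardinal.exists_forall_ge_mk_Iio_eq (κ : Cardinal.{u}) :
    ∃ x₀ : (Order.succ κ).ord.ToType, ∀ δ, x₀ ≤ δ → #(Iio δ) = κ := by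
  have hκ_lt : κ.ord < Ordinal.type (α := (Order.succ κ).ord.ToType) (· < ·) := by
    rw [Ordinal.type_toType]; exact ord_lt_ord.2 (Order.lt_succ κ)
  set x₀ := Ordinal.enum (α := (Order.succ κ).ord.ToType) (· < ·) ⟨κ.ord, hκ_lt⟩ with hx₀def
  have hx₀ : #(Iio x₀) = κ := by
    change #{y // y < x₀} = κ
    rw [← Ordinal.card_typein (α := (Order.succ κ).ord.ToType) (r := (· < ·)) x₀, hx₀def,
      Ordinal.typein_enum, card_ord]
  refine ⟨x₀, fun δ hδ => le_antisymm ?_ ?_⟩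
  · have hlt := mk_Iio_lt δ (by simp)
    rw [mk_ord_toType] at hlt
    exact Order.lt_succ_iff.1 hlt
  · exact hx₀.symm.trans_le (mk_le_mk_of_subset (Iio_subset_Iio hδ))

theorem stmt9_general (lam κ : Cardinal.{u}) (hlam : ℵ₀ ≤ lam)
    (h : ∃ (ι M : Type u) (A : Alg ι M), #ι ≤ lam ∧ #M = κ ∧ A.Artinian) :
    ∃ (ι M : Type u) (A : Alg ι M), #ι ≤ lam ∧ #M = Order.succ κ ∧ A.Artinian := by
  obtain ⟨ι, M, A, hι, hM, hA⟩ := h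
  obtain ⟨x₀, hx₀⟩ := Cardinal.exists_forall_ge_mk_Iio_eq κ
  obtain ⟨e⟩ : Nonempty (M ≃ Iio x₀) := Cardinal.eq.1 <| hM.trans (hx₀ x₀ le_rfl).symm
  have φ : ∀ δ, x₀ ≤ δ → Iio δ ≃ Iio x₀ := fun δ hδ =>
    Classical.choice <| Cardinal.eq.1 <| (hx₀ δ hδ).trans (hx₀ x₀ le_rfl).symm
  exact ⟨_, _, A.succAlg e φ, Alg.SuccSig.mk_le hlam hι, mk_ord_toType _, hA.succAlg⟩

/-- Whaley: If there is an Artinian algebra of cardinality κ with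
signature of size at most λ, then there is one of cardinality κ⁺. -/
theorem stmt9 (lam κ : Cardinal.{u}) (hlam : ℵ₀ ≤ lam) (hκ : ℵ₀ ≤ κ)
    (h : ∃ (ι M : Type u) (A : Alg ι M), #ι ≤ lam ∧ #M = κ ∧ A.Artinian) :
    ∃ (ι M : Type u) (A : Alg ι M), #ι ≤ lam ∧ #M = Order.succ κ ∧ A.Artinian :=
  stmt9_general lam κ hlam h
end

section
/- For every infinite cardinal λ, if artin(λ) exists then artin(λ) > λ and artin(λ) is a limit cardinal (it is not the successor of any cardinal). -/
/-!
A set of nullary operations naming every element makes every subalgebra the whole algebra, so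
an algebra of size at most `λ` is Artinian; hence `artin(λ) > λ`.

For the successor step (Whaley), let `A` be Artinian of infinite size `μ ≥ λ` on `M` and let `T`
be a well-order of type `μ⁺`, so that each initial segment `Iio x` embeds into `M` by some
`code x`. On `M ⊕ T` keep the operations of `A` and add one binary operation sending
`(x, y)` with `y < x` to `code x y` and `(x, code x y)` back to `y`. In a descending chain of
subalgebras the traces on `M` are subalgebras of `A`, hence eventually constant; from then on,
a subalgebra containing `x` and meeting its predecessor in the same trace on `M` contains every
`y < x` of the predecessor, so the elements of `T` dropped along the chain strictly decrease,
which is impossible in a well-order. This gives an Artinian algebra of size `μ⁺`.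
-/

universe u

open Cardinal

/-- `ArtinAt lam κ` : every algebra of cardinality κ with at most lam operations is
non-Artinian. -/
def ArtinAt (lam κ : Cardinal.{u}) : Prop :=
  ∀ (ι M : Type u) (A : Alg ι M), #ι ≤ lam → #M = κ → ¬ A.Artinian

/-- `FrAt lam κ` : every algebra of cardinality κ with at most lam operations has an
infinite free subset. -/
def FrAt (lam κ : Cardinal.{u}) : Prop :=
  ∀ (ι M : Type u) (A : Alg ι M), #ι ≤ lam → #M = κ →
    ∃ X : Set M, X.Infinite ∧ A.Free X

namespace Alg

variable {ι M : Type u}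

def constants (M : Type u) : Alg M M where
  arity _ := 0
  op m _ := m

theorem closed_constants_eq_univ {S : Set M} (hS : (constants M).Closed S) : S = Set.univ :=
  Set.eq_univ_of_forall fun m => hS m Fin.elim0 fun k => k.elim0

theorem artinian_constants (M : Type u) : (constants M).Artinian := by
  rintro ⟨S, hS, hdesc⟩
  have h0 := closed_constants_eq_univ (hS 0).2
  have h1 := closed_constants_eq_univ (hS 1).2
  exact (hdesc 0).ne (h1.trans h0.symm)

theorem Artinian.wellFoundedLT {A : Alg ι M} (hA : A.Artinian) :
    WellFoundedLT {S : Set M // A.Closed S} := by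
  refine ⟨RelEmbedding.wellFounded_iff_isEmpty.2 ⟨fun f => hA ?_⟩⟩
  have hdesc : ∀ n, (f (n + 1)).1 ⊂ (f n).1 := fun n => f.map_rel_iff.2 n.lt_succ_self
  exact ⟨fun n => (f n).1, fun n => ⟨Set.nonempty_of_ssubset' (hdesc n), (f n).2⟩, hdesc⟩

section Extension

variable {T : Type u} [LinearOrder T]

/-- The binary operation of the extension: `(x, y) ↦ code x y` for `y < x`, and
`(x, code x y) ↦ y`; its other values are irrelevant. -/
noncomputable def pairing (code : (x : T) → Set.Iio x ↪ M) : M ⊕ T → M ⊕ T → M ⊕ T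
  | .inr x, .inr y => if h : y < x then .inl (code x ⟨y, h⟩) else .inr x
  | .inr x, .inl d =>
    match Function.partialInv (code x) d with
    | some y => .inr y
    | none => .inr x
  | a, _ => a

theorem pairing_inr_inr (code : (x : T) → Set.Iio x ↪ M) {x y : T} (h : y < x) :
    pairing code (.inr x) (.inr y) = .inl (code x ⟨y, h⟩) :=
  dif_pos h

theorem pairing_inr_code (code : (x : T) → Set.Iio x ↪ M) (x : T) (y : Set.Iio x) :
    pairing code (.inr x) (.inl (code x y)) = .inr y := by
  simp only [pairing, Function.partialInv_left (code x).injective]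

noncomputable def extension [Nonempty M] (A : Alg ι M) (code : (x : T) → Set.Iio x ↪ M) :
    Alg (Option ι) (M ⊕ T) where
  arity
    | none => 2
    | some i => A.arity i
  op
    | none => fun v => pairing code (v 0) (v 1)
    | some i => fun v => .inl (A.op i (Sum.elim id (fun _ => Classical.arbitrary M) ∘ v))

variable [Nonempty M] {A : Alg ι M} {code : (x : T) → Set.Iio x ↪ M}

theorem Closed.preimage_inl {S : Set (M ⊕ T)} (hS : (A.extension code).Closed S) :
    A.Closed (Sum.inl ⁻¹' S) :=
  fun i x hx => hS (some i) (Sum.inl ∘ x) hx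

theorem Closed.pairing_mem {S : Set (M ⊕ T)} (hS : (A.extension code).Closed S) {a b : M ⊕ T}
    (ha : a ∈ S) (hb : b ∈ S) : pairing code a b ∈ S :=
  hS none ![a, b] fun k => by fin_cases k <;> assumption

theorem Closed.inr_mem_of_lt {S S' : Set (M ⊕ T)} (hS : (A.extension code).Closed S)
    (hS' : (A.extension code).Closed S') (hsub : S' ⊆ S)
    (htrace : Sum.inl ⁻¹' S ⊆ Sum.inl ⁻¹' S') {x y : T} (hyx : y < x) (hx : .inr x ∈ S')
    (hy : .inr y ∈ S) : .inr y ∈ S' := by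
  have hcode : Sum.inl (code x ⟨y, hyx⟩) ∈ S' := by
    apply htrace
    simpa only [Set.mem_preimage, pairing_inr_inr code hyx] using
      hS.pairing_mem (hsub hx) hy
  simpa only [pairing_inr_code] using hS'.pairing_mem hx hcode

theorem Artinian.extension [WellFoundedLT T] (hA : A.Artinian) :
    (A.extension code).Artinian := by
  rintro ⟨S, hS, hdesc⟩
  have hanti : Antitone S := antitone_nat_of_succ_le fun n => (hdesc n).subset
  have := hA.wellFoundedLT
  obtain ⟨N, hN⟩ := WellFoundedLT.antitone_chain_condition (f := fun n =>
    (⟨Sum.inl ⁻¹' S n, (hS n).2.preimage_inl⟩ : {D : Set M // A.Closed D}))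
    fun m n hmn => Set.preimage_mono (hanti hmn)
  have hconst (m : ℕ) (hm : N ≤ m) : Sum.inl ⁻¹' S m = Sum.inl ⁻¹' S N :=
    (congrArg Subtype.val (hN m hm)).symm
  have htrace (k : ℕ) : Sum.inl ⁻¹' S (N + k) ⊆ Sum.inl ⁻¹' S (N + k + 1) := by
    rw [hconst (N + k) (by omega), hconst (N + k + 1) (by omega)]
  have hdrop : ∀ k, ∃ y : T, .inr y ∈ S (N + k) ∧ .inr y ∉ S (N + k + 1) := fun k => by
    obtain ⟨b, hb, hb'⟩ := Set.exists_of_ssubset (hdesc (N + k))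
    rcases b with d | y
    · exact absurd (htrace k hb) hb'
    · exact ⟨y, hb, hb'⟩
  choose y hy hy' using hdrop
  refine not_strictAnti_of_wellFoundedLT y (strictAnti_nat_of_succ_lt fun k => ?_)
  rcases lt_trichotomy (y (k + 1)) (y k) with hlt | heq | hgt
  · exact hlt
  · exact absurd (heq ▸ hy (k + 1)) (hy' k)
  · exact absurd ((hS _).2.inr_mem_of_lt (hS _).2 (hdesc _).subset (htrace k) hgt (hy (k + 1))
      (hy k)) (hy' k)

end Extension

end Alg

theorem not_artinAt_of_le {lam κ : Cardinal.{u}} (h : κ ≤ lam) : ¬ ArtinAt lam κ := fun hκ =>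
  hκ κ.out κ.out (Alg.constants κ.out) (by rwa [mk_out]) (mk_out κ) (Alg.artinian_constants _)

theorem not_artinAt_succ {lam μ : Cardinal.{u}} (hlam : ℵ₀ ≤ lam) (hμ : ℵ₀ ≤ μ)
    (h : ¬ ArtinAt lam μ) : ¬ ArtinAt lam (Order.succ μ) := by
  simp only [ArtinAt, not_forall, not_not] at h
  obtain ⟨ι, M, A, hι, hM, hA⟩ := h
  have : Nonempty M := mk_ne_zero_iff.1 (hM ▸ (aleph0_pos.trans_le hμ).ne')
  let T := (Order.succ μ).ord.ToType
  have hIio (x : T) : #(Set.Iio x) ≤ #M := by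
    have hT : #T = Order.succ μ := mk_ord_toType _
    have hlt := mk_Iio_lt x (by rw [hT, Ordinal.type_toType])
    rw [hT] at hlt
    exact (Order.lt_succ_iff.1 hlt).trans_eq hM.symm
  let code (x : T) : Set.Iio x ↪ M := (le_def _ _).1 (hIio x) |>.some
  refine fun hart => hart _ _ (A.extension code) ?_ ?_ hA.extension
  · rw [mk_option]
    exact (add_le_add hι (one_le_aleph0.trans hlam)).trans (add_eq_self hlam).le
  · rw [mk_sum, lift_id, lift_id, hM, mk_ord_toType]
    exact add_eq_right (hμ.trans (Order.le_succ μ)) (Order.le_succ μ)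

/-- If artin(λ) exists then artin(λ) > λ and artin(λ) is a limit
cardinal (not the successor of any cardinal). -/
theorem stmt11 (lam κ₀ : Cardinal.{u}) (hlam : ℵ₀ ≤ lam)
    (hleast : IsLeast {κ | ArtinAt lam κ} κ₀) :
    lam < κ₀ ∧ ∀ μ : Cardinal.{u}, κ₀ ≠ Order.succ μ := by
  have hgt : lam < κ₀ := lt_of_not_ge fun h => not_artinAt_of_le h hleast.1
  refine ⟨hgt, fun μ hsucc => ?_⟩
  have hμ : ¬ ArtinAt lam μ := fun h =>
    (hsucc ▸ Order.lt_succ μ).not_ge (hleast.2 h)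
  have hlamμ : lam ≤ μ := Order.lt_succ_iff.1 (hsucc ▸ hgt)
  exact not_artinAt_succ hlam (hlam.trans hlamμ) hμ (hsucc ▸ hleast.1)
end

section
/- (Singular compactness step) Let κ be a singular cardinal of uncountable cofinality Θ, witnessed by an increasing sequence of cardinals (κ_α)_{α<Θ} with supremum κ. Suppose M is an algebra on κ such that each κ_α is closed under the operations in a suitable sense: for each α < Θ and each operation f, f maps κ_γ^{arity} into κ_γ for all γ ≥ some index depending on f, and moreover each κ_α carries an Artinian subalgebra structure. If M ∩ κ_α is a subalgebra for each α and each of these restricted algebras is Artinian, then M is Artinian. -/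
universe u

open Cardinal

/-!
Fix a descending chain `Mn` of subalgebras. By hypothesis its trace on each `K α` stabilizes
from some index `N α`. The map `α ↦ N α` goes from an order of uncountable cofinality Θ into `ℕ`,
so one of its fibres `{α | N α = k}` is cofinal. Since `K` is monotone and covers `M`, the sets
`K α` with `α` in that fibre still cover `M`, so the whole chain is constant from `k` on.
-/

theorem Order.exists_isCofinal_fiber_of_aleph0_lt_cof {α : Type u} [LinearOrder α]
    (h : ℵ₀ < Order.cof α) (f : α → ℕ) : ∃ k, IsCofinal {a | f a = k} := by
  have hunion : IsCofinal (⋃ k : ULift.{u} ℕ, {a | f a = k.down}) :=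
    fun a ↦ ⟨a, Set.mem_iUnion.2 ⟨⟨f a⟩, rfl⟩, le_rfl⟩
  obtain ⟨k, hk⟩ := isCofinal_of_isCofinal_iUnion hunion (by simpa using h)
  exact ⟨k.down, hk⟩

theorem Set.eq_of_inter_eq_of_isCofinal {α M : Type*} [Preorder α] {K : α → Set M}
    (hmono : Monotone K) (hcover : ∀ m, ∃ a, m ∈ K a) {C : Set α} (hC : IsCofinal C)
    {s t : Set M} (h : ∀ a ∈ C, s ∩ K a = t ∩ K a) : s = t := by
  ext m
  obtain ⟨a, ha⟩ := hcover m
  obtain ⟨b, hbC, hab⟩ := hC a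
  have hmb : m ∈ K b := hmono hab ha
  simpa [hmb] using congrArg (m ∈ ·) (h b hbC)

/-- singular compactness step: Let Θ be a regular uncountable cardinal
and `K : Θ.ord.toType → Set M` a monotone family covering `M` (the traces of the
cardinals κ_α on the carrier). If for every descending ω-chain of subalgebras the
trace on each `K α` stabilizes, then every descending ω-chain of subalgebras of the
algebra stabilizes (the algebra is Artinian). -/
theorem stmt13 {ι M : Type u} (A : Alg ι M) (Θ : Cardinal.{u})
    (hreg : Θ.IsRegular) (hunc : ℵ₀ < Θ)
    (K : Θ.ord.ToType → Set M) (hmono : Monotone K)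
    (hcover : ∀ m : M, ∃ α, m ∈ K α)
    (htrace : ∀ Mn : ℕ → Set M, (∀ n, A.Closed (Mn n)) → (∀ n, Mn (n + 1) ⊆ Mn n) →
      ∀ α, ∃ N, ∀ n, N ≤ n → Mn n ∩ K α = Mn N ∩ K α) :
    ∀ Mn : ℕ → Set M, (∀ n, A.Closed (Mn n)) → (∀ n, Mn (n + 1) ⊆ Mn n) →
      ∃ N, ∀ n, N ≤ n → Mn n = Mn N := by
  intro Mn hclosed hchain
  choose N hN using htrace Mn hclosed hchain
  have hcof : ℵ₀ < Order.cof Θ.ord.ToType := by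
    rwa [Ordinal.cof_toType, hreg.cof_ord]
  obtain ⟨k, hk⟩ := Order.exists_isCofinal_fiber_of_aleph0_lt_cof hcof N
  refine ⟨k, fun n hn ↦ Set.eq_of_inter_eq_of_isCofinal hmono hcover hk fun α hα ↦ ?_⟩
  obtain rfl : N α = k := hα
  exact hN α n hn
end

section
/- (Shelah) For every infinite cardinal λ, the least cardinal at which Artinian algebras with signature of size ≤ λ cease to exist equals the least cardinal at which all such algebras have infinite free subsets: fr(λ) = artin(λ) (where both may be ∞, i.e., either both exist and are equal, or neither exists). -/
universe u

open Cardinal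

/-! ### Auxiliary development for the proof -/

namespace Stmt16Aux

variable {ι M : Type u}

/-- Closure is transitive/compositional. -/
theorem cl_comp {A : Alg ι M} {T R : Set M} {x : M} (h : A.cl T x)
    (h2 : ∀ t ∈ T, A.cl R t) : A.cl R x := by
  induction h with
  | base h => exact h2 _ h
  | op i y _ ih => exact Alg.cl.op i y ih

theorem cl_mono {A : Alg ι M} {X Y : Set M} (h : X ⊆ Y) {x : M} (hx : A.cl X x) :
    A.cl Y x :=
  cl_comp hx (fun t ht => Alg.cl.base (h ht))

theorem cl_closed {A : Alg ι M} {S : Set M} (hS : A.Closed S) {X : Set M}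
    (hX : X ⊆ S) {x : M} (h : A.cl X x) : x ∈ S := by
  induction h with
  | base h => exact hX h
  | op i y _ ih => exact hS i y ih

/-- Finite character of the closure. -/
theorem cl_finchar {A : Alg ι M} {X : Set M} {x : M} (h : A.cl X x) :
    ∃ F : Finset M, ↑F ⊆ X ∧ A.cl (↑F : Set M) x := by
  classical
  induction h with
  | base h =>
    exact ⟨{_}, by simpa using h, Alg.cl.base (by simp)⟩
  | op i y _ ih =>
    choose F hF1 hF2 using ih
    refine ⟨Finset.univ.biUnion F, ?_, ?_⟩
    · intro a ha
      rw [Finset.mem_coe, Finset.mem_biUnion] at ha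
      obtain ⟨k, -, hk⟩ := ha
      exact hF1 k hk
    · refine Alg.cl.op i y (fun k => cl_mono ?_ (hF2 k))
      intro a ha
      exact Finset.mem_coe.mpr (Finset.mem_biUnion.mpr ⟨k, Finset.mem_univ k, Finset.mem_coe.mp ha⟩)

/-- An ordinal-valued rank on `M` coming from a well-ordering. -/
noncomputable def mval (M : Type u) : M → Ordinal.{u} :=
  Ordinal.typein (@WellOrderingRel M)

theorem mval_inj : Function.Injective (mval M) :=
  Ordinal.typein_injective _

/-- The candidate condition: `y` is a tuple avoiding `a` from which together with `u`
the element `a` is generated. -/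
def Cnd (A : Alg ι M) {i s : ℕ} (a : M) (u : Fin s → M) (y : Fin i → M) : Prop :=
  (∀ t, y t ≠ a) ∧ A.cl (Set.range y ∪ Set.range u) a

noncomputable def maxval {i : ℕ} (y : Fin i → M) : Ordinal.{u} :=
  Finset.univ.sup (fun t => mval M (y t))

theorem le_maxval {i : ℕ} (y : Fin i → M) (t : Fin i) : mval M (y t) ≤ maxval y :=
  Finset.le_sup (f := fun t => mval M (y t)) (Finset.mem_univ t)

theorem maxval_mem {i : ℕ} (hi : 0 < i) (y : Fin i → M) :
    ∃ t : Fin i, maxval y = mval M (y t) := by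
  obtain ⟨t, -, ht⟩ := Finset.exists_mem_eq_sup (Finset.univ : Finset (Fin i))
    ⟨⟨0, hi⟩, Finset.mem_univ _⟩ (fun t => mval M (y t))
  exact ⟨t, ht⟩

/-- Optimal candidates: candidates of minimal `maxval`. -/
def IsOpt (A : Alg ι M) {i s : ℕ} (a : M) (u : Fin s → M) (y : Fin i → M) : Prop :=
  Cnd A a u y ∧ ∀ y' : Fin i → M, Cnd A a u y' → maxval y ≤ maxval y'

theorem exists_opt (A : Alg ι M) {i s : ℕ} (a : M) (u : Fin s → M)
    (h : ∃ y : Fin i → M, Cnd A a u y) : ∃ y : Fin i → M, IsOpt A a u y := by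
  obtain ⟨o, ho, hmin⟩ := Ordinal.lt_wf.has_min
    (Set.range (fun y : {y : Fin i → M // Cnd A a u y} => maxval y.1))
    (by obtain ⟨y, hy⟩ := h; exact ⟨_, ⟨⟨y, hy⟩, rfl⟩⟩)
  obtain ⟨⟨y, hy⟩, rfl⟩ := ho
  exact ⟨y, hy, fun y' hy' => not_lt.mp (hmin _ ⟨⟨y', hy'⟩, rfl⟩)⟩

open Classical in
noncomputable def pickT (A : Alg ι M) (i s : ℕ) (a : M) (u : Fin s → M) : Fin i → M :=
  if h : ∃ y : Fin i → M, IsOpt A a u y then h.choose else fun _ => a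

theorem pickT_spec {A : Alg ι M} {i s : ℕ} {a : M} {u : Fin s → M}
    (h : ∃ y : Fin i → M, Cnd A a u y) : IsOpt A a u (pickT A i s a u) := by
  rw [pickT, dif_pos (exists_opt A a u h)]
  exact (exists_opt A a u h).choose_spec

/-- The special operations. -/
noncomputable def gOp (A : Alg ι M) (i s jj : ℕ) (args : Fin (s + 1) → M) : M :=
  if hj : jj < i then pickT A i s (args 0) (fun t => args t.succ) ⟨jj, hj⟩
  else args 0

/-- Index type of the expanded algebra. -/
def Bidx (ι : Type u) : Type u := ι ⊕ ULift.{u} (ℕ × ℕ × ℕ)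

def bArity (A : Alg ι M) : Bidx ι → ℕ
  | Sum.inl i => A.arity i
  | Sum.inr x => x.down.2.1 + 1

noncomputable def bOp (A : Alg ι M) : (j : Bidx ι) → (Fin (bArity A j) → M) → M
  | Sum.inl i => A.op i
  | Sum.inr x => gOp A x.down.1 x.down.2.1 x.down.2.2

/-- The expansion of `A` by all "minimal witness tuple" operations. -/
noncomputable def BAlg (A : Alg ι M) : Alg (Bidx ι) M where
  arity := bArity A
  op := bOp A

theorem cl_toB {A : Alg ι M} {X : Set M} {x : M} (h : A.cl X x) : (BAlg A).cl X x := by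
  induction h with
  | base h => exact Alg.cl.base h
  | op i y _ ih => exact Alg.cl.op (A := BAlg A) (Sum.inl i) y ih

theorem pickT_mem_cl {A : Alg ι M} {i s : ℕ} {a : M} {u : Fin s → M} (j : Fin i) :
    (BAlg A).cl (insert a (Set.range u)) (pickT A i s a u j) := by
  have harg : ∀ k : Fin (s + 1), Fin.cons (α := fun _ => M) a u k ∈ insert a (Set.range u) := by
    intro k
    refine Fin.cases ?_ ?_ k
    · simp
    · intro t; simp only [Fin.cons_succ]; exact Set.mem_insert_iff.mpr (Or.inr ⟨t, rfl⟩)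
  have h := Alg.cl.op (A := BAlg A) (Sum.inr ⟨(i, s, (j : ℕ))⟩)
    (Fin.cons a u) (fun k => Alg.cl.base (harg k))
  have heq : (BAlg A).op (Sum.inr ⟨(i, s, (j : ℕ))⟩) (Fin.cons a u) = pickT A i s a u j := by
    show gOp A i s (j : ℕ) (Fin.cons a u) = pickT A i s a u j
    rw [gOp, dif_pos j.isLt]
    have h1 : (fun t : Fin s => Fin.cons (α := fun _ => M) a u t.succ) = u := by
      funext t; simp
    have h2 : Fin.cons (α := fun _ => M) a u 0 = a := rfl
    rw [h1, h2, Fin.eta]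
  rwa [heq] at h

/-! ### Enemy sequences -/

/-- The set of values of a sequence beyond position `n`. -/
def tailSet (e : ℕ → M) (n : ℕ) : Set M := {x | ∃ m, n < m ∧ e m = x}

/-- A sequence witnessing non-Artinian-ness: no entry is generated by the later ones. -/
def IsEnemy (B : Alg ι M) (e : ℕ → M) : Prop := ∀ n, ¬ B.cl (tailSet e n) (e n)

/-- Iteratively minimized families of enemies: at stage `n+1` keep only those enemies
whose `n`-th value has minimal rank. -/
def En (B : Alg ι M) : ℕ → Set (ℕ → M)
  | 0 => {e | IsEnemy B e}
  | n + 1 => {e | e ∈ En B n ∧ ∀ e' ∈ En B n, mval M (e n) ≤ mval M (e' n)}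

theorem en_succ_subset {B : Alg ι M} {n : ℕ} : En B (n + 1) ⊆ En B n := fun _ he => he.1

theorem en_subset {B : Alg ι M} {k m : ℕ} (h : k ≤ m) : En B m ⊆ En B k := by
  induction m with
  | zero => rw [Nat.le_zero.mp h]
  | succ m ih =>
    rcases Nat.eq_or_lt_of_le h with rfl | h'
    · exact subset_rfl
    · exact fun e he => ih (by omega) he.1

theorem en_enemy {B : Alg ι M} {n : ℕ} {e : ℕ → M} (he : e ∈ En B n) : IsEnemy B e :=
  en_subset (Nat.zero_le n) he

theorem en_nonempty {B : Alg ι M} (hne : ∃ e, IsEnemy B e) : ∀ n, (En B n).Nonempty := by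
  intro n
  induction n with
  | zero => exact hne
  | succ n ih =>
    obtain ⟨o, ho, hmin⟩ := Ordinal.lt_wf.has_min
      ((fun e : ℕ → M => mval M (e n)) '' En B n) (ih.image _)
    obtain ⟨e, heEn, he⟩ := ho
    refine ⟨e, heEn, fun e' he' => ?_⟩
    have : mval M (e n) = o := he
    rw [this]
    exact not_lt.mp (hmin _ ⟨e', he', rfl⟩)

theorem en_agree {B : Alg ι M} {n : ℕ} {e e' : ℕ → M}
    (he : e ∈ En B (n + 1)) (he' : e' ∈ En B (n + 1)) : e n = e' n :=
  mval_inj (le_antisymm (he.2 e' (en_succ_subset he')) (he'.2 e (en_succ_subset he)))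

/-! ### The main lemma -/

theorem main_lemma {A : Alg ι M} (nofree : ∀ X : Set M, X.Infinite → ¬ A.Free X)
    (hne : ∃ e, IsEnemy (BAlg A) e) : False := by
  classical
  set B := BAlg A with hBdef
  have hEn : ∀ n, (En B n).Nonempty := en_nonempty hne
  set zs : ℕ → M := fun n => (hEn (n + 1)).some n with hzsdef
  have hzsn : ∀ n, zs n = (hEn (n + 1)).some n := fun n => by rw [hzsdef]
  have h_pick_mem : ∀ n, (hEn n).some ∈ En B n := fun n => (hEn n).some_mem
  have h_agree : ∀ m n : ℕ, n < m → (hEn m).some n = zs n := by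
    intro m n h
    rw [hzsn n]
    exact en_agree (en_subset (by omega) (h_pick_mem m)) (h_pick_mem (n + 1))
  have zs_char : ∀ (n : ℕ) (e : ℕ → M),
      e ∈ En B n ↔ (IsEnemy B e ∧ ∀ k < n, e k = zs k) := by
    intro n
    induction n with
    | zero => exact fun e => ⟨fun he => ⟨he, fun k hk => absurd hk (by omega)⟩, fun h => h.1⟩
    | succ n ih =>
      intro e
      constructor
      · intro he
        obtain ⟨h1, h2⟩ := (ih e).mp he.1
        refine ⟨h1, fun k hk => ?_⟩
        rcases Nat.lt_or_ge k n with h3 | h3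
        · exact h2 k h3
        · have hkn : k = n := by omega
          subst hkn
          rw [hzsn k]
          exact en_agree he (h_pick_mem (k + 1))
      · rintro ⟨hen, hag⟩
        have h0 : e ∈ En B n := (ih e).mpr ⟨hen, fun k hk => hag k (by omega)⟩
        refine ⟨h0, fun e'' he'' => ?_⟩
        rw [hag n (by omega), hzsn n]
        exact (h_pick_mem (n + 1)).2 e'' he''
  have zs_enemy : IsEnemy B zs := by
    intro n hcl
    obtain ⟨F, hF1, hF2⟩ := cl_finchar hcl
    have hidx : ∀ y ∈ F, ∃ m, n < m ∧ zs m = y := fun y hy => hF1 hy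
    choose g hg1 hg2 using hidx
    set N : ℕ := (insert n (F.attach.image (fun y => g y.1 y.2))).max' (by simp) with hNdef
    have hnN : n ≤ N := Finset.le_max' _ _ (by simp)
    have hgN : ∀ (y : M) (hy : y ∈ F), g y hy ≤ N := by
      intro y hy
      refine Finset.le_max' _ _ ?_
      simp only [Finset.mem_insert, Finset.mem_image, Finset.mem_attach, true_and]
      exact Or.inr ⟨⟨y, hy⟩, rfl⟩
    have heq : ∀ k ≤ N, (hEn (N + 2)).some k = zs k := fun k hk => h_agree _ _ (by omega)
    refine en_enemy (h_pick_mem (N + 2)) n ?_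
    rw [heq n hnN]
    refine cl_mono ?_ hF2
    intro y hy
    exact ⟨g y hy, hg1 y hy, by rw [heq _ (hgN y hy)]; exact hg2 y hy⟩
  have zs_least : ∀ (n : ℕ) (y : ℕ → M), IsEnemy B y → (∀ k < n, y k = zs k) →
      mval M (zs n) ≤ mval M (y n) := by
    intro n y hy hag
    rw [hzsn n]
    exact (h_pick_mem (n + 1)).2 y ((zs_char n y).mpr ⟨hy, hag⟩)
  have zs_inj : Function.Injective zs := by
    have key : ∀ a b : ℕ, a < b → zs a ≠ zs b := by
      intro a b hab he
      exact zs_enemy a (Alg.cl.base ⟨b, hab, he.symm⟩)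
    intro a b hab
    by_contra hne'
    rcases Nat.lt_or_ge a b with h | h
    · exact key a b h hab
    · exact key b a (by omega) hab.symm
  -- a violation of freeness for the range of `zs`
  have hXinf : (Set.range zs).Infinite := Set.infinite_range_of_injective zs_inj
  have hnf := nofree _ hXinf
  rw [Alg.Free] at hnf
  push_neg at hnf
  obtain ⟨x, hxX, hxcl⟩ := hnf
  obtain ⟨n, rfl⟩ := hxX
  obtain ⟨F, hF1, hF2⟩ := cl_finchar hxcl
  have hidx : ∀ y ∈ F, ∃ m, m ≠ n ∧ zs m = y := by
    intro y hy
    obtain ⟨⟨m, hm⟩, hy2⟩ := hF1 hy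
    refine ⟨m, ?_, hm⟩
    rintro rfl
    exact hy2 (by rw [← hm]; rfl)
  choose g hg1 hg2 using hidx
  set I : Finset ℕ := F.attach.image (fun y => g y.1 y.2) with hIdef
  have hInotn : ∀ m ∈ I, m ≠ n := by
    intro m hm
    rw [hIdef, Finset.mem_image] at hm
    obtain ⟨y, -, rfl⟩ := hm
    exact hg1 y.1 y.2
  have hFI : (↑F : Set M) = zs '' ↑I := by
    ext y
    constructor
    · intro hy
      refine ⟨g y hy, ?_, hg2 y hy⟩
      rw [Finset.mem_coe, hIdef, Finset.mem_image]
      exact ⟨⟨y, hy⟩, Finset.mem_attach F _, rfl⟩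
    · rintro ⟨m, hm, rfl⟩
      rw [Finset.mem_coe, hIdef, Finset.mem_image] at hm
      obtain ⟨y, -, rfl⟩ := hm
      rw [hg2 y.1 y.2]
      exact y.2
  set J : Finset ℕ := I.filter (fun m => m < n) with hJdef
  set S : Finset ℕ := I.filter (fun m => n < m) with hSdef
  have hIJS : (↑I : Set ℕ) = ↑J ∪ ↑S := by
    ext m
    simp only [hJdef, hSdef, Finset.coe_filter, Set.mem_union, Set.mem_setOf_eq,
      Finset.mem_coe]
    constructor
    · intro hm
      rcases Nat.lt_or_ge m n with h | h
      · exact Or.inl ⟨hm, h⟩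
      · exact Or.inr ⟨hm, by have := hInotn m hm; omega⟩
    · rintro (⟨hm, -⟩ | ⟨hm, -⟩) <;> exact hm
  set i : ℕ := J.card with hidef
  set s : ℕ := S.card with hsdef
  set Jl : Fin i → ℕ := fun t => ((J.orderIsoOfFin rfl t : ℕ)) with hJldef
  set Sl : Fin s → ℕ := fun t => ((S.orderIsoOfFin rfl t : ℕ)) with hSldef
  have hJlmem : ∀ t, Jl t ∈ J := fun t => (J.orderIsoOfFin rfl t).2
  have hSlmem : ∀ t, Sl t ∈ S := fun t => (S.orderIsoOfFin rfl t).2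
  have hJlr : Set.range (fun t => zs (Jl t)) = zs '' ↑J := by
    ext x
    constructor
    · rintro ⟨t, rfl⟩; exact ⟨Jl t, hJlmem t, rfl⟩
    · rintro ⟨m, hm, rfl⟩
      refine ⟨(J.orderIsoOfFin rfl).symm ⟨m, hm⟩, ?_⟩
      rw [hJldef]
      simp
  set U : Fin s → M := fun t => zs (Sl t) with hUdef
  have hSlr : Set.range U = zs '' ↑S := by
    ext x
    constructor
    · rintro ⟨t, rfl⟩; exact ⟨Sl t, hSlmem t, rfl⟩
    · rintro ⟨m, hm, rfl⟩
      refine ⟨(S.orderIsoOfFin rfl).symm ⟨m, hm⟩, ?_⟩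
      rw [hUdef, hSldef]
      simp
  set ξ : M := zs n with hxidef
  have hLCnd : Cnd A ξ U (fun t => zs (Jl t)) := by
    constructor
    · intro t h
      have h1 := (Finset.mem_filter.mp (hJlmem t)).2
      have h2 := zs_inj h
      omega
    · have hr : Set.range (fun t => zs (Jl t)) ∪ Set.range U = (↑F : Set M) := by
        rw [hJlr, hSlr, ← Set.image_union, ← hIJS, ← hFI]
      rw [hr]
      exact hF2
  have hCnd : ∃ y : Fin i → M, Cnd A ξ U y := ⟨_, hLCnd⟩
  have hOpt := pickT_spec hCnd
  set w : Fin i → M := pickT A i s ξ U with hwdef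
  have hwcl : ∀ j : Fin i, B.cl (insert ξ (Set.range U)) (w j) := fun j => pickT_mem_cl j
  set N : ℕ := (insert n I).max' (by simp) with hNdef
  have hnN : n ≤ N := Finset.le_max' _ _ (by simp)
  have hIN : ∀ m ∈ I, m ≤ N := fun m hm => Finset.le_max' _ _ (by simp [hm])
  by_cases hall : ∀ j : Fin i, B.cl (tailSet zs N) (w j)
  · -- all witness components lie deep: contradiction with the enemy property at n
    refine zs_enemy n ?_
    have h2 : B.cl (Set.range w ∪ Set.range U) ξ := cl_toB hOpt.1.2
    refine cl_comp h2 ?_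
    rintro t (⟨j, rfl⟩ | ⟨tt, rfl⟩)
    · refine cl_mono ?_ (hall j)
      rintro x ⟨m, hm, rfl⟩
      exact ⟨m, by omega, rfl⟩
    · exact Alg.cl.base ⟨Sl tt, (Finset.mem_filter.mp (hSlmem tt)).2, rfl⟩
  · -- some witness component is shallow: splice it into the minimal enemy
    push_neg at hall
    obtain ⟨j, hj⟩ := hall
    set c : M := w j with hcdef
    obtain ⟨t₀, ht₀⟩ := maxval_mem j.pos (fun t => zs (Jl t))
    set j₀ : ℕ := Jl t₀ with hj₀def
    have hj₀n : j₀ < n := (Finset.mem_filter.mp (hJlmem t₀)).2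
    have hval : mval M c ≤ mval M (zs j₀) := by
      calc mval M c ≤ maxval w := le_maxval w j
        _ ≤ maxval (fun t => zs (Jl t)) := hOpt.2 _ hLCnd
        _ = mval M (zs j₀) := ht₀
    have hccl : B.cl (insert ξ (Set.range U)) c := hwcl j
    have hbase : insert ξ (Set.range U) ⊆ tailSet zs j₀ := by
      rintro x (rfl | ⟨tt, rfl⟩)
      · exact ⟨n, hj₀n, rfl⟩
      · exact ⟨Sl tt, by have := (Finset.mem_filter.mp (hSlmem tt)).2; omega, rfl⟩
    have hcj₀ : B.cl (tailSet zs j₀) c := cl_mono hbase hccl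
    set y : ℕ → M := fun q => if q < j₀ then zs q else if q = j₀ then c
      else zs (N + (q - j₀)) with hydef
    have hylt : ∀ q, q < j₀ → y q = zs q := fun q h => if_pos h
    have hyeq : y j₀ = c := by rw [hydef]; simp
    have hygt : ∀ q, j₀ < q → y q = zs (N + (q - j₀)) := by
      intro q h
      rw [hydef]
      simp only
      rw [if_neg (by omega), if_neg (by omega)]
    have hy_enemy : IsEnemy B y := by
      intro p hclp
      rcases lt_trichotomy p j₀ with hp | hp | hp
      · refine zs_enemy p ?_
        rw [hylt p hp] at hclp
        refine cl_comp hclp ?_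
        rintro x ⟨q, hq, rfl⟩
        rcases lt_trichotomy q j₀ with h1 | h1 | h1
        · rw [hylt q h1]
          exact Alg.cl.base ⟨q, hq, rfl⟩
        · subst h1
          rw [hyeq]
          refine cl_mono ?_ hcj₀
          rintro x ⟨m, hm, rfl⟩
          exact ⟨m, by omega, rfl⟩
        · rw [hygt q h1]
          exact Alg.cl.base ⟨N + (q - j₀), by omega, rfl⟩
      · subst hp
        rw [hyeq] at hclp
        refine hj ?_
        refine cl_comp hclp ?_
        rintro x ⟨q, hq, rfl⟩
        rw [hygt q hq]
        exact Alg.cl.base ⟨N + (q - j₀), by omega, rfl⟩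
      · refine zs_enemy (N + (p - j₀)) ?_
        rw [hygt p hp] at hclp
        refine cl_comp hclp ?_
        rintro x ⟨q, hq, rfl⟩
        rw [hygt q (by omega)]
        exact Alg.cl.base ⟨N + (q - j₀), by omega, rfl⟩
    have hleast := zs_least j₀ y hy_enemy (fun k hk => hylt k hk)
    rw [hyeq] at hleast
    have hceq : c = zs j₀ := mval_inj (le_antisymm hval hleast)
    refine zs_enemy j₀ ?_
    rw [← hceq]
    exact cl_mono hbase hccl

/-! ### The two directions -/

theorem frat_to_artinat {lam κ : Cardinal.{u}} (h : FrAt lam κ) : ArtinAt lam κ := by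
  intro ι M A hι hM hart
  obtain ⟨X, hXinf, hXfree⟩ := h ι M A hι hM
  let e : ℕ ↪ X := Set.Infinite.natEmbedding X hXinf
  let D : ℕ → Set M := fun n => (fun k => (e k : M)) '' {k | k < n}
  have hDfin : ∀ n, (D n).Finite := fun n => (Set.finite_lt_nat n).image _
  have hDmono : ∀ n, D n ⊆ D (n + 1) := by
    rintro n x ⟨k, hk, hkx⟩
    exact ⟨k, by simp only [Set.mem_setOf_eq] at hk ⊢; omega, hkx⟩
  have hmemD : ∀ n, (e n : M) ∈ D (n + 1) := fun n => ⟨n, by simp, rfl⟩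
  have hnotD : ∀ n, (e n : M) ∉ D n := by
    rintro n ⟨k, hk, hkx⟩
    have h1 : e k = e n := Subtype.coe_injective hkx
    have h2 := e.injective h1
    simp only [Set.mem_setOf_eq] at hk
    omega
  refine hart ⟨fun n => {m | A.cl (X \ D n) m}, fun n => ⟨?_, ?_⟩, fun n => ?_⟩
  · obtain ⟨x, hx⟩ := (hXinf.diff (hDfin n)).nonempty
    exact ⟨x, Alg.cl.base hx⟩
  · exact fun i x hx => Alg.cl.op i x hx
  · rw [Set.ssubset_def]
    constructor
    · intro m hm
      exact cl_mono (Set.diff_subset_diff_right (hDmono n)) hm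
    · intro hsub
      have h1 : A.cl (X \ D n) (e n : M) := Alg.cl.base ⟨(e n).2, hnotD n⟩
      have h2 := hsub h1
      refine hXfree (e n : M) (e n).2 (cl_mono ?_ h2)
      rintro x ⟨hx1, hx2⟩
      refine ⟨hx1, fun hxx => hx2 ?_⟩
      rw [Set.mem_singleton_iff] at hxx
      rw [hxx]
      exact hmemD n

theorem artinat_to_frat {lam κ : Cardinal.{u}} (hlam : ℵ₀ ≤ lam) (h : ArtinAt lam κ) :
    FrAt lam κ := by
  intro ι M A hι hM
  by_contra hno
  push_neg at hno
  have nofree : ∀ X : Set M, X.Infinite → ¬ A.Free X := hno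
  have hcard : #(Bidx ι) ≤ lam := by
    have h1 : #(Bidx ι) = #ι + #(ULift.{u} (ℕ × ℕ × ℕ)) := by
      rw [Bidx, Cardinal.mk_sum, Cardinal.lift_id, Cardinal.lift_id]
    rw [h1]
    have h2 : #(ULift.{u} (ℕ × ℕ × ℕ)) ≤ ℵ₀ := Cardinal.mk_le_aleph0
    calc #ι + #(ULift.{u} (ℕ × ℕ × ℕ)) ≤ lam + lam := add_le_add hι (h2.trans hlam)
      _ = lam := Cardinal.add_eq_self hlam
  have hB := h _ M (BAlg A) hcard hM
  rw [Alg.Artinian, not_not] at hB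
  obtain ⟨S, hS, hdesc⟩ := hB
  have hzex : ∀ n, ∃ x, x ∈ S n ∧ x ∉ S (n + 1) := by
    intro n
    obtain ⟨x, hx1, hx2⟩ := Set.exists_of_ssubset (hdesc n)
    exact ⟨x, hx1, hx2⟩
  choose z hz1 hz2 using hzex
  have hsub : ∀ a b : ℕ, a ≤ b → S b ⊆ S a := by
    intro a b hab
    induction b with
    | zero => rw [Nat.le_zero.mp hab]
    | succ b ih =>
      rcases Nat.eq_or_lt_of_le hab with rfl | h'
      · exact subset_rfl
      · exact ((hdesc b).1).trans (ih (by omega))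
  have henemy : IsEnemy (BAlg A) z := by
    intro n hcl
    refine hz2 n ?_
    refine cl_closed (hS (n + 1)).2 ?_ hcl
    rintro x ⟨m, hm, rfl⟩
    exact hsub (n + 1) m (by omega) (hz1 m)
  exact main_lemma nofree ⟨z, henemy⟩

end Stmt16Aux

theorem artinAt_iff_frAt (lam : Cardinal.{u}) (hlam : ℵ₀ ≤ lam) (κ : Cardinal.{u}) :
    ArtinAt lam κ ↔ FrAt lam κ :=
  ⟨Stmt16Aux.artinat_to_frat hlam, Stmt16Aux.frat_to_artinat⟩


/-- Shelah: fr(λ) = artin(λ), in the strong sense that the set of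
cardinals where Artinian algebras cease to exist and the set where all algebras have
infinite free subsets are simultaneously empty or not, with equal least elements
(equal infima). -/
theorem stmt16 (lam : Cardinal.{u}) (hlam : ℵ₀ ≤ lam) :
    ({κ | ArtinAt lam κ}.Nonempty ↔ {κ | FrAt lam κ}.Nonempty) ∧
      sInf {κ | ArtinAt lam κ} = sInf {κ | FrAt lam κ} := by
  have hset : {κ | ArtinAt lam κ} = {κ | FrAt lam κ} :=
    Set.ext fun κ => artinAt_iff_frAt lam hlam κ
  rw [hset]
  exact ⟨Iff.rfl, rfl⟩
end

section
/- Let M be an algebra on an infinite cardinal κ with signature of size λ < κ. Then there is an algebra M' on κ extending the signature of M by countably many operations, still of signature size λ, such that every finite subset u of κ is contained in the subalgebra of M' generated by a single element; moreover every subalgebra of M' is a subalgebra of M. -/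
universe u

open Cardinal

/-- Given an algebra `A` on an infinite carrier of cardinality κ with
signature of size ≤ λ < κ, there is an algebra `A'` extending the signature of `A`
by countably many operations, still of signature size ≤ λ, such that every finite
subset of the carrier is contained in the subalgebra of `A'` generated by a single
element; moreover every subalgebra of `A'` is a subalgebra of `A`. -/
theorem stmt18 {ι M : Type u} (A : Alg ι M) [Infinite M] (lam : Cardinal.{u})
    (hlam : ℵ₀ ≤ lam) (hι : #ι ≤ lam) (hκ : lam < #M) :
    ∃ A' : Alg (ι ⊕ ℕ) M,
      #(ι ⊕ ℕ) ≤ lam ∧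
      (∃ e : ∀ i : ι, A'.arity (Sum.inl i) = A.arity i,
        ∀ (i : ι) (x : Fin (A'.arity (Sum.inl i)) → M),
          A'.op (Sum.inl i) x = A.op i (fun k => x (Fin.cast (e i).symm k))) ∧
      (∀ u : Finset M, ∃ a : M, ∀ m ∈ u, A'.cl {a} m) ∧
      (∀ S : Set M, A'.Closed S → A.Closed S) := by
  obtain ⟨e⟩ := Cardinal.eq.mp (Cardinal.mk_finset_of_infinite M).symm
  set H : M → Finset M := fun m => e m with hH
  refine ⟨⟨Sum.elim A.arity (fun _ => 1),
      fun i => match i with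
      | Sum.inl i => fun x => A.op i x
      | Sum.inr n => fun x => ((H (x ⟨0, Nat.one_pos⟩)).toList.getD n (x ⟨0, Nat.one_pos⟩))⟩,
    ?_, ⟨fun i => rfl, fun i x => rfl⟩, ?_, ?_⟩
  · simp only [Cardinal.mk_sum, Cardinal.mk_nat, Cardinal.lift_aleph0, Cardinal.lift_uzero]
    exact Cardinal.add_le_of_le hlam hι hlam
  · intro u
    refine ⟨e.symm u, fun m hm => ?_⟩
    have hmem : m ∈ (H (e.symm u)).toList := by
      simp [hH, e.apply_symm_apply, Finset.mem_toList]; exact hm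
    obtain ⟨n, hn, hget⟩ := List.getElem_of_mem hmem
    have : ((H (e.symm u)).toList.getD n (e.symm u)) = m := by
      rw [List.getD_eq_getElem _ _ hn, hget]
    have h := Alg.cl.op (A := ⟨Sum.elim A.arity (fun _ => 1),
      fun i => match i with
      | Sum.inl i => fun x => A.op i x
      | Sum.inr n => fun x => ((H (x ⟨0, Nat.one_pos⟩)).toList.getD n (x ⟨0, Nat.one_pos⟩))⟩) (X := {e.symm u})
      (Sum.inr n) (fun _ => e.symm u) (fun _ => Alg.cl.base rfl)
    rw [← this]; exact h
  · intro S hS i x hx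
    exact hS (Sum.inl i) x hx
end
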